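/- arXiv:1703.06061 — 3 statements merged into one kernel-verified Lean document; each statement's English description precedes it below -/
import Mathlib

section
/- Let m ≥ 4 with binary representation b_t b_{t−1} ⋯ b_1 b_0 (b_t = 1, t = ⌊log₂ m⌋), and let 1 ≤ r ≤ t − 1. After r rounds of RePair on input a^m (with rules X_1 → aa, X_i → X_{i−1}X_{i−1}), the right-hand side of the start rule is X_r^{q} f_{r−1}(b_{r−1}) ⋯ f_1(b_1) f_0(b_0), where q = ⌊m/2^r⌋, f_0(1) = a, f_i(1) = X_i, f_i(0) = ε. -/
/-- Symbols appearing in RePair's grammars: nonterminals (numbered) or terminals. -/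
abbrev RSym (α : Type) := ℕ ⊕ α

/-- A grammar in RePair's working representation: the list of right-hand sides, where the
rule at position `i` is the rule of nonterminal `i` and the start nonterminal is `0`. -/
abbrev Grammar (α : Type) := List (List (RSym α))

def countNOAux {σ : Type} [DecidableEq σ] (γ : List σ) : ℕ → List σ → ℕ
  | 0, _ => 0
  | fuel + 1, w =>
    if w = [] then 0
    else if γ <+: w then 1 + countNOAux γ fuel (w.drop γ.length)
    else countNOAux γ fuel w.tail

/-- The maximal number of pairwise non-overlapping occurrences of `γ` (with `|γ| ≥ 1`)
in `w`, computed by the left-to-right greedy strategy. -/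
def countNO {σ : Type} [DecidableEq σ] (γ w : List σ) : ℕ := countNOAux γ w.length w

def replaceNOAux {σ : Type} [DecidableEq σ] (γ : List σ) (X : σ) : ℕ → List σ → List σ
  | 0, w => w
  | _ + 1, [] => []
  | fuel + 1, s :: tl =>
    if γ <+: (s :: tl) then X :: replaceNOAux γ X fuel ((s :: tl).drop γ.length)
    else s :: replaceNOAux γ X fuel tl

/-- Replace the non-overlapping occurrences of `γ` in `w`, left to right, by `X`. -/
def replaceNO {σ : Type} [DecidableEq σ] (γ : List σ) (X : σ) (w : List σ) : List σ :=
  replaceNOAux γ X w.length w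

/-- The number of pairwise non-overlapping occurrences of `γ` in the right-hand sides. -/
def freq {α : Type} [DecidableEq α] (G : Grammar α) (γ : List (RSym α)) : ℕ :=
  (G.map (countNO γ)).sum

/-- `γ` is a maximal string of `G`: it has length at least two, occurs at least twice
without overlap, and no strictly longer word occurs at least as many times. -/
def IsMaxStr {α : Type} [DecidableEq α] (G : Grammar α) (γ : List (RSym α)) : Prop :=
  2 ≤ γ.length ∧ 2 ≤ freq G γ ∧ ∀ δ, γ.length < δ.length → freq G δ < freq G γ

/-- One round of RePair: pick a most frequent maximal string `γ`, replace its occurrences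
left to right by the fresh nonterminal `G.length`, and append the new rule `X → γ`. -/
def RePairStep {α : Type} [DecidableEq α] (G G' : Grammar α) : Prop :=
  ∃ γ, IsMaxStr G γ ∧ (∀ δ, IsMaxStr G δ → freq G δ ≤ freq G γ) ∧
    G' = (G.map (fun r => replaceNO γ (Sum.inl G.length) r)) ++ [γ]

/-- `RePairSteps r G G'`: `G'` is obtained from `G` by `r` rounds of RePair. -/
inductive RePairSteps {α : Type} [DecidableEq α] : ℕ → Grammar α → Grammar α → Prop
  | refl (G) : RePairSteps 0 G G
  | tail {n : ℕ} {G₁ G₂ G₃ : Grammar α} :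
      RePairSteps n G₁ G₂ → RePairStep G₂ G₃ → RePairSteps (n + 1) G₁ G₃

/-- The initial grammar `S → w`. -/
def RePairInit {α : Type} (w : List α) : Grammar α := [w.map Sum.inr]

/-- `G` is an output of RePair on input `w`: reachable from `S → w` by rounds of RePair,
with no maximal string left. -/
def RePairRun {α : Type} [DecidableEq α] (w : List α) (G : Grammar α) : Prop :=
  (∃ n, RePairSteps n (RePairInit w) G) ∧ ∀ γ, ¬ IsMaxStr G γ

/-- The size of a grammar: total length of all right-hand sides. -/
def gramSize {α : Type} (G : Grammar α) : ℕ := (G.map List.length).sum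

/-!
Induction on the number of rounds, with the invariant that after `k` rounds the grammar is
`S → X_k^q f_{k-1}(b_{k-1}) ⋯ f_0(b_0)` together with `X_{i+1} → X_i X_i` for `i < k`, where
`q = ⌊m / 2^k⌋`. While `q ≥ 4`, the digram `X_k X_k` occurs `⌊q/2⌋ ≥ 2` times, whereas any
other word of length at least two occurs at most `max 1 ⌊q/3⌋ < ⌊q/2⌋` times: a longer run of
`X_k` needs at least three copies per occurrence, every other symbol occurs at most once in the
start rule, and each remaining rule is a single pair. So RePair must pick `X_k X_k`, and the
greedy replacement halves the run of `X_k`, leaving `X_k` behind exactly when `b_k = 1`.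
-/

section Greedy

variable {σ : Type} {γ : List σ}

theorem length_drop_length_cons_le (hγ : γ ≠ []) (s : σ) (tl : List σ) :
    ((s :: tl).drop γ.length).length ≤ tl.length := by
  have := List.length_pos_iff.mpr hγ
  simp only [List.length_drop, List.length_cons]
  omega

variable [DecidableEq σ]

@[simp] theorem countNO_nil : countNO γ [] = 0 := rfl

theorem countNOAux_eq_of_length_le (hγ : γ ≠ []) :
    ∀ {f₁ f₂ : ℕ} {w : List σ}, w.length ≤ f₁ → w.length ≤ f₂ →
      countNOAux γ f₁ w = countNOAux γ f₂ w
  | f₁, f₂, [], _, _ => by cases f₁ <;> cases f₂ <;> rfl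
  | 0, _, _ :: _, h, _ | _, 0, _ :: _, _, h => by simp at h
  | f₁ + 1, f₂ + 1, s :: tl, h₁, h₂ => by
    have hdrop := length_drop_length_cons_le hγ s tl
    simp only [List.length_cons, Nat.add_le_add_iff_right] at h₁ h₂
    simp only [countNOAux, List.cons_ne_nil, if_false, List.tail_cons,
      countNOAux_eq_of_length_le hγ (hdrop.trans h₁) (hdrop.trans h₂),
      countNOAux_eq_of_length_le hγ h₁ h₂]

theorem countNO_cons (hγ : γ ≠ []) (s : σ) (tl : List σ) :
    countNO γ (s :: tl) =
      if γ <+: s :: tl then 1 + countNO γ ((s :: tl).drop γ.length) else countNO γ tl := by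
  have hdrop := length_drop_length_cons_le hγ s tl
  simp only [countNO, List.length_cons, countNOAux, List.cons_ne_nil, if_false, List.tail_cons,
    countNOAux_eq_of_length_le hγ hdrop le_rfl]

theorem replaceNOAux_eq_of_length_le (hγ : γ ≠ []) (X : σ) :
    ∀ {f₁ f₂ : ℕ} {w : List σ}, w.length ≤ f₁ → w.length ≤ f₂ →
      replaceNOAux γ X f₁ w = replaceNOAux γ X f₂ w
  | f₁, f₂, [], _, _ => by cases f₁ <;> cases f₂ <;> rfl
  | 0, _, _ :: _, h, _ | _, 0, _ :: _, _, h => by simp at h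
  | f₁ + 1, f₂ + 1, s :: tl, h₁, h₂ => by
    have hdrop := length_drop_length_cons_le hγ s tl
    simp only [List.length_cons, Nat.add_le_add_iff_right] at h₁ h₂
    simp only [replaceNOAux,
      replaceNOAux_eq_of_length_le hγ X (hdrop.trans h₁) (hdrop.trans h₂),
      replaceNOAux_eq_of_length_le hγ X h₁ h₂]

theorem replaceNO_cons (hγ : γ ≠ []) (X s : σ) (tl : List σ) :
    replaceNO γ X (s :: tl) =
      if γ <+: s :: tl then X :: replaceNO γ X ((s :: tl).drop γ.length)
      else s :: replaceNO γ X tl := by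
  have hdrop := length_drop_length_cons_le hγ s tl
  simp only [replaceNO, List.length_cons, replaceNOAux,
    replaceNOAux_eq_of_length_le hγ X hdrop le_rfl]

theorem countNO_mul_count_le (hγ : γ ≠ []) (s : σ) :
    ∀ w : List σ, countNO γ w * γ.count s ≤ w.count s
  | [] => by simp
  | a :: tl => by
    rw [countNO_cons hγ]
    split_ifs with hp
    · obtain ⟨rest, hrest⟩ := hp
      have := countNO_mul_count_le hγ s ((a :: tl).drop γ.length)
      rw [← hrest, List.drop_left] at this ⊢
      rw [List.count_append]
      nlinarith
    · have := countNO_mul_count_le hγ s tl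
      rw [List.count_cons]
      omega
termination_by w => w.length
decreasing_by
  · exact Nat.lt_succ_of_le (length_drop_length_cons_le hγ a tl)
  · simp

theorem countNO_eq_zero_of_not_mem {s : σ} (hs : s ∈ γ) {w : List σ} (hw : s ∉ w) :
    countNO γ w = 0 := by
  have h := countNO_mul_count_le (List.ne_nil_of_mem hs) s w
  rw [List.count_eq_zero_of_not_mem hw] at h
  exact (Nat.mul_eq_zero.mp (Nat.le_zero.mp h)).resolve_right (List.count_pos_iff.mpr hs).ne'

theorem replaceNO_eq_self_of_not_mem {s : σ} (hs : s ∈ γ) (X : σ) :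
    ∀ {w : List σ}, s ∉ w → replaceNO γ X w = w
  | [], _ => rfl
  | a :: tl, hw => by
    have hp : ¬ γ <+: a :: tl := fun hp => hw (hp.subset hs)
    rw [replaceNO_cons (List.ne_nil_of_mem hs), if_neg hp,
      replaceNO_eq_self_of_not_mem hs X (fun h => hw (List.mem_cons_of_mem a h))]

theorem countNO_of_length_le (hγ : γ ≠ []) :
    ∀ {w : List σ}, w.length ≤ γ.length → countNO γ w = if γ = w then 1 else 0
  | [], _ => by simp [hγ]
  | a :: tl, hw => by
    rw [countNO_cons hγ]
    split_ifs with hp heq heq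
    · simp [heq]
    · exact absurd (hp.eq_of_length (le_antisymm hp.length_le hw)) heq
    · exact absurd (heq ▸ List.prefix_rfl) hp
    · rw [countNO_of_length_le hγ (by simp at hw; omega), if_neg]
      rintro rfl
      simp at hw

theorem sum_map_countNO_eq_count [BEq (List σ)] [LawfulBEq (List σ)] {L : List (List σ)}
    (hγ : γ ≠ []) (hL : ∀ w ∈ L, w.length ≤ γ.length) : (L.map (countNO γ)).sum = L.count γ := by
  induction L with
  | nil => rfl
  | cons w L ih =>
    rw [List.map_cons, List.sum_cons, List.count_cons, countNO_of_length_le hγ (hL w (by simp)),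
      ih (fun v hv => hL v (by simp [hv]))]
    simp only [beq_iff_eq, @eq_comm _ w γ]
    omega

variable {x : σ} {t : List σ}

theorem countNO_pair_replicate_append (hx : x ∉ t) :
    ∀ q : ℕ, countNO [x, x] (List.replicate q x ++ t) = q / 2
  | 0 => countNO_eq_zero_of_not_mem (by simp) hx
  | 1 => by
    have hp : ¬ [x, x] <+: x :: t := fun h =>
      hx ((List.cons_prefix_cons.mp h).2.subset (List.mem_singleton_self x))
    rw [List.replicate_one, List.singleton_append, countNO_cons (by simp), if_neg hp,
      countNO_eq_zero_of_not_mem (γ := [x, x]) (by simp) hx]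
  | q + 2 => by
    rw [List.replicate_succ, List.replicate_succ, List.cons_append, List.cons_append,
      countNO_cons (by simp), if_pos ⟨_, rfl⟩]
    change 1 + countNO [x, x] (List.replicate q x ++ t) = (q + 2) / 2
    rw [countNO_pair_replicate_append hx q]
    omega

theorem replaceNO_pair_replicate_append (hx : x ∉ t) (X : σ) :
    ∀ q : ℕ, replaceNO [x, x] X (List.replicate q x ++ t) =
      List.replicate (q / 2) X ++ List.replicate (q % 2) x ++ t
  | 0 => replaceNO_eq_self_of_not_mem (by simp) X hx
  | 1 => by
    have hp : ¬ [x, x] <+: x :: t := fun h =>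
      hx ((List.cons_prefix_cons.mp h).2.subset (List.mem_singleton_self x))
    rw [List.replicate_one, List.singleton_append, replaceNO_cons (by simp), if_neg hp,
      replaceNO_eq_self_of_not_mem (γ := [x, x]) (by simp) X hx]
    rfl
  | q + 2 => by
    rw [List.replicate_succ, List.replicate_succ, List.cons_append, List.cons_append,
      replaceNO_cons (by simp), if_pos ⟨_, rfl⟩]
    simp [replaceNO_pair_replicate_append hx X q, Nat.add_div_right, List.replicate_succ]

end Greedy

theorem rePairSteps_zero_iff {α : Type} [DecidableEq α] {G₁ G₂ : Grammar α} :
    RePairSteps 0 G₁ G₂ ↔ G₂ = G₁ :=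
  ⟨fun h => by cases h; rfl, fun h => h ▸ RePairSteps.refl G₁⟩

theorem rePairSteps_succ_iff {α : Type} [DecidableEq α] {n : ℕ} {G₁ G₃ : Grammar α} :
    RePairSteps (n + 1) G₁ G₃ ↔ ∃ G₂, RePairSteps n G₁ G₂ ∧ RePairStep G₂ G₃ :=
  ⟨fun h => by cases h with | tail h₁ h₂ => exact ⟨_, h₁, h₂⟩,
    fun ⟨_, h₁, h₂⟩ => RePairSteps.tail h₁ h₂⟩

namespace UnaryRePair

-- The derived `BEq` on `ℕ ⊕ Unit` is not known to be lawful, so `List.count` would have no API.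
attribute [local instance 2000] instBEqOfDecidableEq

/-- `X i` derives `a ^ 2 ^ i`; `X 0` is the terminal `a` itself. -/
def X (i : ℕ) : RSym Unit := if i = 0 then Sum.inr () else Sum.inl i

theorem X_injective : Function.Injective X := by
  intro i j h
  unfold X at h
  split_ifs at h <;> simp_all

theorem X_of_ne_zero {i : ℕ} (hi : i ≠ 0) : X i = Sum.inl i := if_neg hi

/-- The symbols `f_{k-1}(b_{k-1}) ⋯ f_0(b_0)` encoding `m mod 2 ^ k`. -/
def digitSuffix (m k : ℕ) : List (RSym Unit) :=
  (List.range k).reverse.flatMap fun i => if m.testBit i then [X i] else []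

def startRule (m k : ℕ) : List (RSym Unit) :=
  List.replicate (m / 2 ^ k) (X k) ++ digitSuffix m k

def rules (k : ℕ) : Grammar Unit := (List.range k).map fun i => [X i, X i]

def grammar (m k : ℕ) : Grammar Unit := startRule m k :: rules k

theorem digitSuffix_succ (m k : ℕ) :
    digitSuffix m (k + 1) = (if m.testBit k then [X k] else []) ++ digitSuffix m k := by
  simp [digitSuffix, List.range_succ]

theorem X_not_mem_digitSuffix (m : ℕ) {i k : ℕ} (hki : k ≤ i) : X i ∉ digitSuffix m k := by
  induction k with
  | zero => simp [digitSuffix]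
  | succ k ih =>
    have hne : X i ≠ X k := fun h => by have := X_injective h; omega
    rw [digitSuffix_succ]
    split_ifs <;> simp [hne, ih (by omega)]

theorem nodup_digitSuffix (m k : ℕ) : (digitSuffix m k).Nodup := by
  induction k with
  | zero => simp [digitSuffix]
  | succ k ih =>
    rw [digitSuffix_succ]
    split_ifs
    · exact ih.cons (X_not_mem_digitSuffix m le_rfl)
    · exact ih

theorem count_startRule_X (m k : ℕ) : (startRule m k).count (X k) = m / 2 ^ k := by
  simp [startRule, List.count_eq_zero_of_not_mem (X_not_mem_digitSuffix m le_rfl)]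

theorem count_startRule_le_one {m k : ℕ} {s : RSym Unit} (hs : s ≠ X k) :
    (startRule m k).count s ≤ 1 := by
  rw [startRule, List.count_append, List.count_replicate, if_neg (by simpa using hs.symm),
    zero_add]
  exact List.nodup_iff_count_le_one.mp (nodup_digitSuffix m k) s

theorem nodup_rules (k : ℕ) : (rules k).Nodup :=
  List.nodup_range.map fun i j h => X_injective (by simpa using h)

theorem lt_of_X_mem_of_mem_rules {i k : ℕ} {γ : List (RSym Unit)} (hγ : γ ∈ rules k) (hi : X i ∈ γ) :
    i < k := by
  obtain ⟨j, hj, rfl⟩ := List.mem_map.mp hγ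
  simp only [List.mem_cons, List.not_mem_nil, or_false, or_self] at hi
  exact X_injective hi ▸ List.mem_range.mp hj

theorem freq_grammar (m k : ℕ) {γ : List (RSym Unit)} (hγ : 2 ≤ γ.length) :
    freq (grammar m k) γ = countNO γ (startRule m k) + (rules k).count γ := by
  rw [freq, grammar, List.map_cons, List.sum_cons,
    sum_map_countNO_eq_count (List.ne_nil_of_length_pos (by omega))]
  intro w hw
  obtain ⟨i, -, rfl⟩ := List.mem_map.mp hw
  simpa using hγ

theorem freq_grammar_pair (m k : ℕ) : freq (grammar m k) [X k, X k] = m / 2 ^ k / 2 := by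
  have hX : [X k, X k] ∉ rules k := fun h => (lt_of_X_mem_of_mem_rules h (by simp)).false
  rw [freq_grammar m k (by simp), List.count_eq_zero_of_not_mem hX, startRule,
    countNO_pair_replicate_append (X_not_mem_digitSuffix m le_rfl), add_zero]

theorem freq_grammar_replicate_mul_le (m k : ℕ) {L : ℕ} (hL : 2 ≤ L) :
    freq (grammar m k) (List.replicate L (X k)) * L ≤ m / 2 ^ k := by
  have hX : List.replicate L (X k) ∉ rules k :=
    fun h => (lt_of_X_mem_of_mem_rules h (List.mem_replicate.mpr ⟨by omega, rfl⟩)).false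
  have hne : List.replicate L (X k) ≠ [] := by simp; omega
  have h := countNO_mul_count_le hne (X k) (startRule m k)
  rwa [List.count_replicate_self, count_startRule_X, ← add_zero (countNO _ _),
    ← List.count_eq_zero_of_not_mem hX, ← freq_grammar m k (by simpa)] at h

theorem freq_grammar_le_one (m : ℕ) {k : ℕ} {γ : List (RSym Unit)} (hγ : 2 ≤ γ.length)
    {s : RSym Unit} (hs : s ∈ γ) (hsk : s ≠ X k) : freq (grammar m k) γ ≤ 1 := by
  have hstart : countNO γ (startRule m k) * γ.count s ≤ 1 :=
    (countNO_mul_count_le (List.ne_nil_of_mem hs) s _).trans (count_startRule_le_one hsk)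
  rw [freq_grammar m k hγ]
  by_cases hrule : γ ∈ rules k
  · obtain ⟨i, -, rfl⟩ := List.mem_map.mp hrule
    have hsi : s = X i := by simpa using hs
    have hcount : (rules k).count [X i, X i] ≤ 1 :=
      List.nodup_iff_count_le_one.mp (nodup_rules k) _
    rw [hsi, List.count_cons_self, List.count_singleton_self] at hstart
    omega
  · have := List.count_pos_iff.mpr hs
    rw [List.count_eq_zero_of_not_mem hrule]
    nlinarith

theorem freq_grammar_lt_pair {m k : ℕ} (hq : 4 ≤ m / 2 ^ k) {γ : List (RSym Unit)}
    (hγ : 2 ≤ γ.length) (hne : γ ≠ [X k, X k]) :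
    freq (grammar m k) γ < freq (grammar m k) [X k, X k] := by
  rw [freq_grammar_pair]
  by_cases hall : ∀ s ∈ γ, s = X k
  · have hrep : γ = List.replicate γ.length (X k) := List.eq_replicate_iff.mpr ⟨rfl, hall⟩
    have hL : 3 ≤ γ.length := by
      by_contra! h
      obtain ⟨a, b, rfl⟩ := List.length_eq_two.mp (by omega : γ.length = 2)
      exact hne (by simp [hall])
    have := freq_grammar_replicate_mul_le m k (L := γ.length) (by omega)
    rw [← hrep] at this
    have := Nat.mul_le_mul_left (freq (grammar m k) γ) hL
    omega
  · push Not at hall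
    obtain ⟨s, hs, hsk⟩ := hall
    have := freq_grammar_le_one m hγ hs hsk
    omega

theorem isMaxStr_pair {m k : ℕ} (hq : 4 ≤ m / 2 ^ k) : IsMaxStr (grammar m k) [X k, X k] := by
  refine ⟨by simp, by rw [freq_grammar_pair]; omega, fun δ hδ => ?_⟩
  have hne : δ ≠ [X k, X k] := by rintro rfl; simp at hδ
  exact freq_grammar_lt_pair hq (by simp at hδ; omega) hne

theorem map_replaceNO_grammar (m k : ℕ) :
    (grammar m k).map (replaceNO [X k, X k] (Sum.inl (grammar m k).length)) ++ [[X k, X k]] =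
      grammar m (k + 1) := by
  have hlen : (grammar m k).length = k + 1 := by simp [grammar, rules]
  have hstart : replaceNO [X k, X k] (X (k + 1)) (startRule m k) = startRule m (k + 1) := by
    rw [startRule, replaceNO_pair_replicate_append (X_not_mem_digitSuffix m le_rfl), startRule,
      digitSuffix_succ, List.append_assoc, Nat.div_div_eq_div_mul, ← pow_succ]
    congr 2
    rw [Nat.testBit_eq_decide_div_mod_eq]
    rcases Nat.mod_two_eq_zero_or_one (m / 2 ^ k) with h | h <;> simp [h]
  have hrules : (rules k).map (replaceNO [X k, X k] (X (k + 1))) ++ [[X k, X k]] =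
      rules (k + 1) := by
    rw [rules, rules, List.range_succ, List.map_append, List.map_map]
    congr 1
    refine List.map_congr_left fun i hi => replaceNO_eq_self_of_not_mem (s := X k) (by simp) _ ?_
    have : X k ≠ X i := fun h => by have := X_injective h; simp at hi; omega
    simp [this]
  rw [hlen, ← X_of_ne_zero k.succ_ne_zero, grammar, List.map_cons, hstart, List.cons_append,
    hrules, grammar]

theorem rePairStep_grammar_iff {m k : ℕ} (hq : 4 ≤ m / 2 ^ k) {G : Grammar Unit} :
    RePairStep (grammar m k) G ↔ G = grammar m (k + 1) := by
  constructor
  · rintro ⟨γ, hγ, hmax, rfl⟩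
    obtain rfl : γ = [X k, X k] := by
      by_contra hne
      exact (hmax _ (isMaxStr_pair hq)).not_gt (freq_grammar_lt_pair hq hγ.1 hne)
    exact map_replaceNO_grammar m k
  · rintro rfl
    refine ⟨[X k, X k], isMaxStr_pair hq, fun δ hδ => ?_, (map_replaceNO_grammar m k).symm⟩
    rcases eq_or_ne δ [X k, X k] with rfl | hne
    · exact le_rfl
    · exact (freq_grammar_lt_pair hq hδ.1 hne).le

theorem grammar_zero (m : ℕ) : grammar m 0 = RePairInit (List.replicate m ()) := by
  simp [grammar, startRule, digitSuffix, rules, RePairInit, X]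

theorem rePairSteps_iff {m r : ℕ} (h : 2 ^ (r + 1) ≤ m) {G : Grammar Unit} :
    RePairSteps r (RePairInit (List.replicate m ())) G ↔ G = grammar m r := by
  induction r generalizing G with
  | zero => rw [rePairSteps_zero_iff, grammar_zero]
  | succ r ih =>
    have hq : 4 ≤ m / 2 ^ r := by
      rw [Nat.le_div_iff_mul_le (by positivity)]
      calc 4 * 2 ^ r = 2 ^ (r + 2) := by ring
        _ ≤ m := h
    have h' : 2 ^ (r + 1) ≤ m := le_trans (Nat.pow_le_pow_right two_pos r.succ.le_succ) h
    simp only [rePairSteps_succ_iff, ih h', exists_eq_left, rePairStep_grammar_iff hq]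

end UnaryRePair

theorem repair_stmt_13_general (m r : ℕ) (hr1 : 1 ≤ r)
    (hr2 : r ≤ Nat.log 2 m - 1) :
    (∃ G : Grammar Unit, RePairSteps r (RePairInit (List.replicate m ())) G) ∧
    ∀ G : Grammar Unit, RePairSteps r (RePairInit (List.replicate m ())) G →
      G.headI = List.replicate (m / 2 ^ r) (Sum.inl r : RSym Unit) ++
        (List.range r).reverse.flatMap (fun i =>
          if Nat.testBit m i then
            [if i = 0 then (Sum.inr () : RSym Unit) else Sum.inl i]
          else []) := by
  have hm : 2 ^ (r + 1) ≤ m := by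
    refine Nat.pow_le_of_le_log (fun hm => ?_) (by omega)
    rw [hm, Nat.log_zero_right] at hr2
    omega
  refine ⟨⟨_, (UnaryRePair.rePairSteps_iff hm).mpr rfl⟩, fun G hG => ?_⟩
  rw [(UnaryRePair.rePairSteps_iff hm).mp hG, ← UnaryRePair.X_of_ne_zero (by omega : r ≠ 0)]
  rfl

/-- After `r` rounds (`1 ≤ r ≤ ⌊log₂ m⌋ - 1`) of RePair on the unary input `a^m`
(`m ≥ 4`), the right-hand side of the start rule is
`(X r)^q · f (r-1) (b (r-1)) ⋯ f 1 (b 1) f 0 (b 0)` with `q = ⌊m / 2^r⌋`, where `b j` is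
the `j`-th binary digit of `m`, `f 0 1 = a`, `f i 1 = X i` and `f i 0 = ε`. -/
theorem repair_stmt_13 (m r : ℕ) (hm : 4 ≤ m) (hr1 : 1 ≤ r)
    (hr2 : r ≤ Nat.log 2 m - 1) :
    (∃ G : Grammar Unit, RePairSteps r (RePairInit (List.replicate m ())) G) ∧
    ∀ G : Grammar Unit, RePairSteps r (RePairInit (List.replicate m ())) G →
      G.headI = List.replicate (m / 2 ^ r) (Sum.inl r : RSym Unit) ++
        (List.range r).reverse.flatMap (fun i =>
          if Nat.testBit m i then
            [if i = 0 then (Sum.inr () : RSym Unit) else Sum.inl i]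
          else []) :=
  repair_stmt_13_general m r hr1 hr2
end

section
/- If N_1 ≥ 2 and N_{i+1} ∈ {2N_i, 2N_i + 1} for 1 ≤ i ≤ k−1, then g((∏_{i=1}^{k-1} a^{N_i} b) a^{N_k}) ≤ g(a^{N_1}) + 3(k−1) + (2k+1) ∈ O(k + log N_1). -/
/-- A straight-line program over alphabet `α`: nonterminals `0, ..., n-1`, each with a
single nonempty right-hand side referring only to smaller nonterminals (acyclicity). -/
structure SLP (α : Type) where
  n : ℕ
  rhs : Fin n → List (Fin n ⊕ α)
  start : Fin n
  dec : ∀ i j, Sum.inl j ∈ rhs i → (j : ℕ) < (i : ℕ)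
  ne : ∀ i, rhs i ≠ []

/-- The word derived by nonterminal `i`. -/
def SLP.val {α : Type} (G : SLP α) (i : Fin G.n) : List α :=
  ((G.rhs i).attach.map (fun s =>
    match h : s.1 with
    | Sum.inl j => G.val j
    | Sum.inr a => [a])).flatten
termination_by (i : ℕ)
decreasing_by exact G.dec i _ (h ▸ s.2)

/-- The size of an SLP: total length of all right-hand sides. -/
def SLP.size {α : Type} (G : SLP α) : ℕ := ∑ i, (G.rhs i).length

def SLP.produces {α : Type} (G : SLP α) (w : List α) : Prop := G.val G.start = w

/-- `gsize w` is the size of a smallest SLP producing `w`. -/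
noncomputable def gsize {α : Type} (w : List α) : ℕ :=
  sInf {s | ∃ G : SLP α, G.produces w ∧ G.size = s}

/-- The word `a^{N 1} b a^{N 2} b ... b a^{N k}` over the alphabet `Fin 2`,
with `a = 0` and `b = 1`. -/
def blockWord (N : ℕ → ℕ) (k : ℕ) : List (Fin 2) :=
  ((List.range (k - 1)).flatMap (fun j => List.replicate (N (j + 1)) 0 ++ [1])) ++
    List.replicate (N k) 0

/-! Since `N i = N (i+1) / 2`, a nonterminal `B (i+1)` deriving `a^(N (i+1))` is given by the
rule `B (i+1) → B i B i a^(N (i+1) % 2)` of length at most 3. Appending `k - 1` such rules and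
the start rule `B 1 b B 2 b ⋯ b B k` to an optimal program for `a^(N 1)` gives the first bound.
The same chain started from the one-letter program and following the binary digits of `n`
derives `a^n` with size `3 log₂ n + 1`, which gives the second. -/

namespace SLP

variable {α : Type}

def expand (G : SLP α) (r : List (Fin G.n ⊕ α)) : List α :=
  r.flatMap (Sum.elim G.val fun a => [a])

theorem val_eq_expand (G : SLP α) (i : Fin G.n) : G.val i = G.expand (G.rhs i) := by
  rw [val, expand, List.flatMap_def, ← List.attach_map_val (l := G.rhs i)]
  congr 1
  apply List.map_congr_left
  rintro ⟨s, _⟩ _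
  rcases s with j | a <;> rfl

theorem val_map_of_rhs_map (G H : SLP α) (φ : Fin G.n → Fin H.n)
    (hφ : ∀ i, H.rhs (φ i) = (G.rhs i).map (Sum.map φ id)) (i : Fin G.n) :
    H.val (φ i) = G.val i := by
  induction i using WellFoundedLT.induction with
  | ind i ih =>
    rw [val_eq_expand, val_eq_expand, hφ, expand, expand, List.flatMap_map]
    refine List.flatMap_congr fun s hs => ?_
    rcases s with j | a
    · exact ih j (G.dec i j hs)
    · rfl

theorem val_withStart (G : SLP α) (s i : Fin G.n) :
    ({ G with start := s } : SLP α).val i = G.val i :=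
  val_map_of_rhs_map G { G with start := s } id (fun i => by simp) i

-- Reducible, so that `Fin (G.snoc r hr).n` and `Fin (G.n + 1)` unify.
@[reducible] def snoc (G : SLP α) (r : List (Fin G.n ⊕ α)) (hr : r ≠ []) : SLP α where
  n := G.n + 1
  rhs := Fin.lastCases (r.map (Sum.map Fin.castSucc id))
    fun i => (G.rhs i).map (Sum.map Fin.castSucc id)
  start := Fin.last G.n
  dec i j hj := by
    induction i using Fin.lastCases with
    | last =>
      obtain ⟨j, -, rfl⟩ : ∃ j', Sum.inl j' ∈ r ∧ Fin.castSucc j' = j := by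
        simpa using hj
      exact j.isLt
    | cast i =>
      obtain ⟨j, hji, rfl⟩ : ∃ j', Sum.inl j' ∈ G.rhs i ∧ Fin.castSucc j' = j := by
        simpa using hj
      exact G.dec i j hji
  ne i := by
    induction i using Fin.lastCases <;> simp [hr, G.ne]

section snoc

variable (G : SLP α) (r : List (Fin G.n ⊕ α)) (hr : r ≠ [])

theorem snoc_val_castSucc (i : Fin G.n) : (G.snoc r hr).val i.castSucc = G.val i :=
  val_map_of_rhs_map G (G.snoc r hr) Fin.castSucc (fun _ => by simp [snoc]) i

theorem snoc_val_last : (G.snoc r hr).val (Fin.last G.n) = G.expand r := by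
  refine (val_eq_expand _ _).trans ?_
  simp only [snoc, Fin.lastCases_last, expand, List.flatMap_map]
  refine List.flatMap_congr fun s _ => ?_
  rcases s with j | a
  · exact snoc_val_castSucc G r hr j
  · rfl

theorem snoc_size : (G.snoc r hr).size = G.size + r.length := by
  show ∑ i : Fin (G.n + 1), _ = _
  simp [size, snoc, Fin.sum_univ_castSucc]

end snoc

def letter (a : α) : SLP α where
  n := 1
  rhs _ := [.inr a]
  start := 0
  dec _ _ h := by simp at h
  ne _ := List.cons_ne_nil _ _

theorem letter_val_start (a : α) : (letter a).val (letter a).start = [a] := by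
  simp [val_eq_expand, letter, expand]

theorem letter_size (a : α) : (letter a).size = 1 := rfl

theorem exists_replicate_chain (G : SLP α) (a : α) (M : ℕ → ℕ) (c : Fin G.n)
    (hc : G.val c = List.replicate (M 0) a) (t : ℕ) (hM : ∀ i < t, M (i + 1) / 2 = M i) :
    ∃ (H : SLP α) (B : ℕ → Fin H.n),
      (∀ i ≤ t, H.val (B i) = List.replicate (M i) a) ∧ H.size ≤ G.size + 3 * t := by
  induction t with
  | zero => exact ⟨G, fun _ => c, fun i hi => by rwa [Nat.le_zero.1 hi], by simp⟩
  | succ t ih =>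
    obtain ⟨H, B, hB, hsize⟩ := ih fun i hi => hM i (by omega)
    let r : List (Fin H.n ⊕ α) :=
      .inl (B t) :: .inl (B t) :: List.replicate (M (t + 1) % 2) (.inr a)
    refine ⟨H.snoc r (List.cons_ne_nil _ _),
      fun i => if i ≤ t then (B i).castSucc else Fin.last H.n, fun i hi => ?_, ?_⟩
    · dsimp only
      by_cases hit : i ≤ t
      · rw [if_pos hit, snoc_val_castSucc, hB i hit]
      · rw [if_neg hit, snoc_val_last, show i = t + 1 by omega]
        have hdigit : M t + (M t + M (t + 1) % 2) = M (t + 1) := by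
          have := Nat.div_add_mod (M (t + 1)) 2
          have := hM t (by omega)
          omega
        simp only [r, expand, List.flatMap_cons, List.flatMap_replicate, Sum.elim_inl,
          Sum.elim_inr, hB t le_rfl, ← List.replicate_one, List.flatten_replicate_replicate,
          ← List.replicate_add, mul_one, hdigit]
    · have : r.length ≤ 3 := by
        simp only [r, List.length_cons, List.length_replicate]
        omega
      rw [snoc_size]
      omega

end SLP

theorem exists_produces_of_val_eq {α : Type} {w : List α} (G : SLP α) (i : Fin G.n)
    (h : G.val i = w) : ∃ H : SLP α, H.produces w ∧ H.size = G.size :=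
  ⟨{ G with start := i }, (G.val_withStart i i).trans h, rfl⟩

theorem gsize_le_of_produces {α : Type} {w : List α} (G : SLP α) (h : G.produces w) :
    gsize w ≤ G.size :=
  Nat.sInf_le ⟨G, h, rfl⟩

theorem exists_produces_size_eq_gsize {α : Type} {w : List α}
    (h : ∃ G : SLP α, G.produces w) : ∃ G : SLP α, G.produces w ∧ G.size = gsize w :=
  let ⟨G, hG⟩ := h
  Nat.sInf_mem (s := {s | ∃ G : SLP α, G.produces w ∧ G.size = s}) ⟨G.size, G, hG, rfl⟩

theorem exists_produces_replicate {α : Type} (a : α) {n : ℕ} (hn : n ≠ 0) :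
    ∃ G : SLP α, G.produces (List.replicate n a) ∧ G.size ≤ 3 * Nat.log 2 n + 1 := by
  set L := Nat.log 2 n
  have hlog : n / 2 ^ L = 1 :=
    Nat.div_eq_of_lt_le (by simpa using Nat.pow_log_le_self 2 hn)
      (by simpa [pow_succ, mul_comm] using Nat.lt_pow_succ_log_self one_lt_two n)
  obtain ⟨H, B, hB, hsize⟩ := SLP.exists_replicate_chain (SLP.letter a) a
    (fun j => n / 2 ^ (L - j)) (SLP.letter a).start (by simp [SLP.letter_val_start, hlog]) L
    fun i hi => by rw [Nat.div_div_eq_div_mul, ← pow_succ, show L - (i + 1) + 1 = L - i by omega]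
  obtain ⟨G, hG, hGsize⟩ := exists_produces_of_val_eq H (B L) (by simpa using hB L le_rfl)
  rw [SLP.letter_size] at hsize
  exact ⟨G, hG, hGsize ▸ by omega⟩

theorem gsize_replicate_le {α : Type} (a : α) {n : ℕ} (hn : n ≠ 0) :
    gsize (List.replicate n a) ≤ 3 * Nat.log 2 n + 1 := by
  obtain ⟨G, hG, hsize⟩ := exists_produces_replicate a hn
  exact (gsize_le_of_produces G hG).trans hsize

theorem expand_eq_blockWord (G : SLP (Fin 2)) (N : ℕ → ℕ) {k : ℕ} (hk : 1 ≤ k)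
    (B : ℕ → Fin G.n) (hB : ∀ i < k, G.val (B i) = List.replicate (N (i + 1)) 0) :
    G.expand ((List.range (k - 1)).flatMap (fun j => [.inl (B j), .inr 1]) ++
      [.inl (B (k - 1))]) = blockWord N k := by
  have hlast : N (k - 1 + 1) = N k := by rw [Nat.sub_add_cancel hk]
  simp only [SLP.expand, blockWord, List.flatMap_append, List.flatMap_assoc, List.flatMap_cons,
    List.flatMap_nil, Sum.elim_inl, Sum.elim_inr, List.append_nil, hB (k - 1) (by omega), hlast]
  congr 1
  refine List.flatMap_congr fun j hj => ?_
  rw [hB j (by simp at hj; omega)]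

theorem gsize_blockWord_le (N : ℕ → ℕ) {k : ℕ} (hk : 1 ≤ k) (hN1 : N 1 ≠ 0)
    (hN : ∀ i, 1 ≤ i → i < k → N (i + 1) / 2 = N i) :
    gsize (blockWord N k) ≤
      gsize (List.replicate (N 1) (0 : Fin 2)) + 3 * (k - 1) + (2 * k - 1) := by
  obtain ⟨G, hG, hGsize⟩ := exists_produces_size_eq_gsize
    ((exists_produces_replicate (0 : Fin 2) hN1).imp fun _ h => h.1)
  obtain ⟨H, B, hB, hHsize⟩ := SLP.exists_replicate_chain G 0 (fun i => N (i + 1)) G.start hG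
    (k - 1) fun i hi => hN (i + 1) (by omega) (by omega)
  let r : List (Fin H.n ⊕ Fin 2) :=
    (List.range (k - 1)).flatMap (fun j => [.inl (B j), .inr 1]) ++ [.inl (B (k - 1))]
  have hr : r ≠ [] := by simp [r]
  have hrlen : r.length = 2 * k - 1 := by
    simp only [r, List.length_append, List.length_flatMap, List.length_cons, List.length_nil,
      List.map_const', List.length_range, List.sum_replicate, smul_eq_mul]
    omega
  have hprod : (H.snoc r hr).produces (blockWord N k) :=
    (H.snoc_val_last r hr).trans (expand_eq_blockWord H N hk B fun i hi => hB i (by omega))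
  have := gsize_le_of_produces _ hprod
  rw [SLP.snoc_size, hrlen] at this
  omega

/-- If `N 1 ≥ 2` and `N (i+1) ∈ {2 · N i, 2 · N i + 1}` for `1 ≤ i ≤ k - 1`, then
`g(a^{N 1} b ⋯ b a^{N k}) ≤ g(a^{N 1}) + 3(k-1) + (2k+1) ∈ O(k + log (N 1))`. -/
theorem repair_stmt_17 (k : ℕ) (hk : 1 ≤ k) (N : ℕ → ℕ) (h1 : 2 ≤ N 1)
    (hstep : ∀ i, 1 ≤ i → i ≤ k - 1 → N (i + 1) = 2 * N i ∨ N (i + 1) = 2 * N i + 1) :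
    gsize (blockWord N k) ≤
      gsize (List.replicate (N 1) (0 : Fin 2)) + 3 * (k - 1) + (2 * k + 1) ∧
    gsize (blockWord N k) ≤
      (3 * Nat.log 2 (N 1) + 3) + 3 * (k - 1) + (2 * k + 1) := by
  have hN : ∀ i, 1 ≤ i → i < k → N (i + 1) / 2 = N i := fun i hi hik => by
    rcases hstep i hi (by omega) with h | h <;> omega
  have hblock := gsize_blockWord_le N hk (by omega) hN
  have hrep := gsize_replicate_le (0 : Fin 2) (n := N 1) (by omega)
  constructor <;> omega
end

section
/- Any SLP of size g over an alphabet Σ produces a word w such that the number of distinct factors of w of length ℓ is at most g·ℓ; consequently, if a word u has at least c·k² distinct factors of length Θ(log k), then g(u) ∈ Ω(k²/log k). -/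
/-! A factor of length `ℓ ≥ 1` of the word derived by a nonterminal either lies inside the
expansion of one symbol of its right-hand side without reaching that expansion's last letter,
or it contains the last letter of some symbol's expansion; in the second case it is determined
by the rule, the symbol occurrence and the position (one of `ℓ`) of that letter in the factor.
Descending into nonterminals, every factor of the produced word is of the second kind for some
rule, so there are at most `ℓ` factors per symbol occurrence, `g · ℓ` in all. The lower bound
on `g(u)` is this count for a smallest SLP producing `u`. -/

namespace List

variable {α : Type}

def factorsAcross (x w : List α) (ℓ : ℕ) : List (List α) :=
  (range' 1 ℓ).map fun k => x.drop (x.length - k) ++ w.take (ℓ - k)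

theorem length_factorsAcross (x w : List α) (ℓ : ℕ) :
    (factorsAcross x w ℓ).length = ℓ := by
  simp [factorsAcross]

theorem append_mem_factorsAcross {x w s p : List α} (hs₀ : s ≠ []) (hs : s <:+ x)
    (hp : p <+: w) : s ++ p ∈ factorsAcross x w (s ++ p).length := by
  refine mem_map.2 ⟨s.length, ?_, ?_⟩
  · have := length_pos_iff.2 hs₀
    simp only [mem_range'_1, length_append]
    omega
  · rw [length_append, Nat.add_sub_cancel_left, ← suffix_iff_eq_drop.1 hs,
      ← prefix_iff_eq_take.1 hp]

theorem infix_append_cases {v x w : List α} (hv : v ≠ []) (h : v <:+: x ++ w) :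
    v <:+: x.dropLast ∨ v <:+: w ∨ v ∈ factorsAcross x w v.length := by
  rcases infix_append_iff.1 h with hx | hw | ⟨s, p, rfl, hs, hp⟩
  · have hx₀ : x ≠ [] := by rintro rfl; exact hv (infix_nil.1 hx)
    rw [← dropLast_append_getLast hx₀] at hx
    rcases infix_concat_iff.1 hx with hsuf | hdl
    · rw [dropLast_append_getLast hx₀] at hsuf
      have := append_mem_factorsAcross hv hsuf (nil_prefix (l := w))
      rw [append_nil] at this
      exact Or.inr (Or.inr this)
    · exact Or.inl hdl
  · exact Or.inr (Or.inl hw)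
  · rcases eq_or_ne s [] with rfl | hs₀
    · exact Or.inr (Or.inl hp.isInfix)
    · exact Or.inr (Or.inr (append_mem_factorsAcross hs₀ hs hp))

def factorsAcrossPieces : List (List α) → ℕ → List (List α)
  | [], _ => []
  | x :: xs, ℓ => factorsAcross x xs.flatten ℓ ++ factorsAcrossPieces xs ℓ

theorem length_factorsAcrossPieces (L : List (List α)) (ℓ : ℕ) :
    (factorsAcrossPieces L ℓ).length = L.length * ℓ := by
  induction L with
  | nil => simp [factorsAcrossPieces]
  | cons x xs ih =>
    simp only [factorsAcrossPieces, length_append, length_factorsAcross, ih, length_cons]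
    ring

theorem infix_flatten_cases {v : List α} (hv : v ≠ []) {L : List (List α)}
    (h : v <:+: L.flatten) :
    (∃ x ∈ L, v <:+: x.dropLast) ∨ v ∈ factorsAcrossPieces L v.length := by
  induction L with
  | nil => exact absurd (infix_nil.1 h) hv
  | cons x xs ih =>
    rw [flatten_cons] at h
    rcases infix_append_cases hv h with hx | hxs | hacross
    · exact Or.inl ⟨x, mem_cons_self, hx⟩
    · rcases ih hxs with ⟨y, hy, hvy⟩ | hmem
      · exact Or.inl ⟨y, mem_cons_of_mem x hy, hvy⟩
      · exact Or.inr (mem_append_right _ hmem)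
    · exact Or.inr (mem_append_left _ hacross)

end List

theorem Set.ncard_le_length_of_subset {α : Type} {s : Set α} {l : List α}
    (h : ∀ x ∈ s, x ∈ l) : s.ncard ≤ l.length := by
  classical
  calc s.ncard ≤ (l.toFinset : Set α).ncard :=
        Set.ncard_le_ncard (fun x hx => by simpa using h x hx) (Finset.finite_toSet _)
    _ ≤ l.length := by rw [Set.ncard_coe_finset]; exact List.toFinset_card_le l

namespace SLP

variable {α : Type} (G : SLP α)

theorem val_eq_flatten (i : Fin G.n) :
    G.val i = ((G.rhs i).map (Sum.elim G.val fun a => [a])).flatten := by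
  rw [SLP.val, ← List.attach_map_val (l := G.rhs i) (f := Sum.elim G.val fun a => [a])]
  congr 1
  refine List.map_congr_left fun ⟨s, _⟩ _ => ?_
  cases s <;> rfl

def boundaryFactors (ℓ : ℕ) : List (List α) :=
  (List.finRange G.n).flatMap fun i =>
    List.factorsAcrossPieces ((G.rhs i).map (Sum.elim G.val fun a => [a])) ℓ

theorem length_boundaryFactors (ℓ : ℕ) : (G.boundaryFactors ℓ).length = G.size * ℓ := by
  simp [boundaryFactors, List.length_flatMap, List.length_factorsAcrossPieces, SLP.size,
    Fin.sum_univ_def, List.sum_map_mul_right]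

theorem mem_boundaryFactors_of_infix_val {v : List α} (hv : v ≠ []) (i : Fin G.n)
    (h : v <:+: G.val i) : v ∈ G.boundaryFactors v.length := by
  induction i using WellFoundedLT.induction with
  | ind i ih =>
    rw [val_eq_flatten] at h
    rcases List.infix_flatten_cases hv h with ⟨x, hx, hvx⟩ | hacross
    · obtain ⟨j | a, hs, rfl⟩ := List.mem_map.1 hx
      · exact ih j (G.dec i j hs) (hvx.trans (List.dropLast_prefix _).isInfix)
      · exact absurd (List.infix_nil.1 hvx) hv
    · exact List.mem_flatMap.2 ⟨i, List.mem_finRange i, hacross⟩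

theorem ncard_factors_val_le {ℓ : ℕ} (hℓ : 1 ≤ ℓ) (i : Fin G.n) :
    {v : List α | v.length = ℓ ∧ v <:+: G.val i}.ncard ≤ G.size * ℓ := by
  rw [← G.length_boundaryFactors ℓ]
  refine Set.ncard_le_length_of_subset fun v ⟨hvℓ, hvi⟩ => ?_
  have hv : v ≠ [] := List.ne_nil_of_length_pos (by omega)
  exact hvℓ ▸ G.mem_boundaryFactors_of_infix_val hv i hvi

theorem exists_produces_of_ne_nil {u : List α} (hu : u ≠ []) : ∃ G : SLP α, G.produces u := by
  refine ⟨⟨1, fun _ => u.map Sum.inr, 0, by simp, by simpa using hu⟩, ?_⟩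
  simp only [produces, val_eq_flatten, List.map_map, Sum.elim_comp_inr]
  exact List.flatMap_singleton' u

end SLP

theorem ncard_factors_le_gsize_mul {α : Type} (u : List α) {ℓ : ℕ} (hℓ : 1 ≤ ℓ) :
    {v : List α | v.length = ℓ ∧ v <:+: u}.ncard ≤ gsize u * ℓ := by
  rcases eq_or_ne u [] with rfl | hu
  -- `gsize [] = sInf ∅ = 0`, but `[]` has no factors of positive length.
  · have : {v : List α | v.length = ℓ ∧ v <:+: []} = ∅ :=
      Set.eq_empty_of_forall_notMem fun v ⟨hvℓ, hv⟩ => by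
        rw [List.infix_nil.1 hv, List.length_nil] at hvℓ
        omega
    rw [this, Set.ncard_empty]
    exact Nat.zero_le _
  · obtain ⟨G₀, hG₀⟩ := SLP.exists_produces_of_ne_nil hu
    have hmin : gsize u ∈ {s | ∃ G : SLP α, G.produces u ∧ G.size = s} :=
      Nat.sInf_mem ⟨G₀.size, G₀, hG₀, rfl⟩
    obtain ⟨G, hG, hsize⟩ := hmin
    rw [← hsize, ← hG]
    exact G.ncard_factors_val_le hℓ G.start

/-- An SLP of size `g` produces a word with at most `g · ℓ` distinct factors of length
`ℓ`; consequently, a word `u` with at least `c · k²` distinct factors of some length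
`ℓ ≤ d · log₂ k` satisfies `g(u) ≥ c · k² / (d · log₂ k)`, i.e. `g(u) ∈ Ω(k²/log k)`. -/
theorem repair_stmt_18 {α : Type} :
    (∀ (G : SLP α) (ℓ : ℕ), 1 ≤ ℓ →
      {v : List α | v.length = ℓ ∧ v <:+: G.val G.start}.ncard ≤ G.size * ℓ) ∧
    (∀ (u : List α) (c d k ℓ : ℕ), 1 ≤ ℓ → ℓ ≤ d * Nat.log 2 k →
      c * k ^ 2 ≤ {v : List α | v.length = ℓ ∧ v <:+: u}.ncard →
      c * k ^ 2 ≤ gsize u * (d * Nat.log 2 k)) :=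
  ⟨fun G _ hℓ => G.ncard_factors_val_le hℓ G.start,
    fun u _ _ _ _ hℓ hlog hcount =>
      hcount.trans ((ncard_factors_le_gsize_mul u hℓ).trans (Nat.mul_le_mul_left _ hlog))⟩
end
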